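/- arXiv:2403.08166 — 3 statements merged into one kernel-verified Lean document; each statement's English description precedes it below -/
import Mathlib

section
/- Piola identity: Let d ≥ 1 and let f : ℝ^d → ℝ^d be twice continuously differentiable. Then the column-wise divergence of the adjugate of the Jacobian of f vanishes identically, i.e. for every x ∈ ℝ^d and every j ∈ {1,…,d}, Σ_{i=1}^d ∂/∂x_i [ (Adj(Df(x)))_{ij} ] = 0. -/
/-!
Write `J = Df`. The entry `Adj(J)_{ij}` is the determinant of `J` with row `j` replaced by `e_i`.
Differentiating the determinant row by row, the constant row `j` contributes nothing, and the
contribution of a row `a ≠ j` to `∑_i ∂_i Adj(J)_{ij}` is `∑_{i,k} ∂_i ∂_k f_a · D(i, k)`, where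
`D(i, k)` is the determinant of `J` with rows `j, a` replaced by `e_i, e_k`. This pairs the Hessian
of `f_a`, symmetric by Schwarz's theorem, with the alternating `D`, so it vanishes.
-/

/-- The Jacobian matrix of a map `f : ℝ^d → ℝ^d` at a point `x`:
`(jacobian f x) i j = ∂ f_i / ∂ x_j`. -/
noncomputable def jacobian {d : ℕ} (f : (Fin d → ℝ) → (Fin d → ℝ)) (x : Fin d → ℝ) :
    Matrix (Fin d) (Fin d) ℝ :=
  Matrix.of fun i j => fderiv ℝ f x (Pi.single j 1) i

open Matrix Finset

variable {n : Type*} [Fintype n] [DecidableEq n]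

section Algebra

variable {R : Type*} [CommRing R]

omit [DecidableEq n] in
theorem sum_sum_mul_eq_zero_of_isSymm_of_alternating {H D : Matrix n n R} (hH : H.IsSymm)
    (hD_diag : ∀ i, D i i = 0) (hD_skew : ∀ i k, D k i = -D i k) :
    ∑ i, ∑ k, H i k * D i k = 0 := by
  rw [← sum_product']
  refine sum_ninvolution Prod.swap (fun ⟨i, k⟩ => ?_) (fun ⟨i, k⟩ hne hswap => ?_)
    (fun _ => mem_univ _) Prod.swap_swap
  · simp only [Prod.swap_prod_mk, hH.apply i k, hD_skew i k]
    ring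
  · obtain rfl : i = k := congrArg Prod.fst hswap.symm
    exact hne (by simp [hD_diag])

theorem det_updateRow_sum_smul (M : Matrix n n R) (a : n) (c : n → R) (w : n → n → R) :
    (M.updateRow a (∑ k, c k • w k)).det = ∑ k, c k * (M.updateRow a (w k)).det := by
  simp only [← det_updateRow_smul]
  exact (detRowAlternating : (n → R) [⋀^n]→ₗ[R] R).map_update_sum univ a _ M

theorem det_updateRow_updateRow_comm (A : Matrix n n R) {j a : n} (hja : j ≠ a) (u v : n → R) :
    ((A.updateRow j u).updateRow a v).det = -((A.updateRow j v).updateRow a u).det := by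
  have hswap : (A.updateRow j v).updateRow a u
      = ((A.updateRow j u).updateRow a v).submatrix (Equiv.swap j a) id := by
    ext m b
    rcases eq_or_ne m j with rfl | hmj
    · simp [hja]
    rcases eq_or_ne m a with rfl | hma
    · simp [hja]
    · simp [hmj, hma, Equiv.swap_apply_of_ne_of_ne hmj hma]
  rw [hswap, det_permute, Equiv.Perm.sign_swap hja]
  simp

theorem sum_det_updateRow_single_updateRow_eq_zero (A : Matrix n n R) {j a : n} (hja : j ≠ a)
    {H : Matrix n n R} (hH : H.IsSymm) :
    ∑ i, ((A.updateRow j (Pi.single i 1)).updateRow a (H i)).det = 0 := by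
  have hexpand : ∀ i, ((A.updateRow j (Pi.single i 1)).updateRow a (H i)).det
      = ∑ k, H i k * ((A.updateRow j (Pi.single i 1)).updateRow a (Pi.single k 1)).det := by
    intro i
    conv_lhs => rw [pi_eq_sum_univ' (H i)]
    exact det_updateRow_sum_smul _ _ _ _
  rw [sum_congr rfl fun i _ => hexpand i]
  refine sum_sum_mul_eq_zero_of_isSymm_of_alternating hH (fun i => ?_) (fun i k => ?_)
  · exact det_zero_of_row_eq hja (by simp [hja])
  · exact det_updateRow_updateRow_comm A hja _ _

end Algebra

section Calculus

variable {𝕜 : Type*} [NontriviallyNormedField 𝕜] {E : Type*} [NormedAddCommGroup E]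
  [NormedSpace 𝕜 E]

noncomputable def Matrix.detRowContinuousMultilinear :
    ContinuousMultilinearMap 𝕜 (fun _ : n => n → 𝕜) 𝕜 where
  toMultilinearMap := (detRowAlternating : (n → 𝕜) [⋀^n]→ₗ[𝕜] 𝕜).toMultilinearMap
  cont := continuous_id.matrix_det

theorem fderiv_det_apply {M : E → Matrix n n 𝕜} {x : E}
    (hM : ∀ a, DifferentiableAt 𝕜 (fun y => M y a) x) (v : E) :
    fderiv 𝕜 (fun y => (M y).det) x v
      = ∑ a, ((M x).updateRow a (fderiv 𝕜 (fun y => M y a) x v)).det := by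
  change fderiv 𝕜 (fun y => detRowContinuousMultilinear fun i => M y i) x v = _
  rw [(HasFDerivAt.multilinear_comp detRowContinuousMultilinear
    fun a => (hM a).hasFDerivAt).fderiv]
  simp only [_root_.sum_apply, ContinuousLinearMap.comp_apply,
    ContinuousMultilinearMap.toContinuousLinearMap_apply]
  rfl

theorem fderiv_det_updateRow_apply {M : E → Matrix n n 𝕜} {x : E}
    (hM : ∀ a, DifferentiableAt 𝕜 (fun y => M y a) x) (j : n) (b : n → 𝕜) (v : E) :
    fderiv 𝕜 (fun y => ((M y).updateRow j b).det) x v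
      = ∑ a ∈ univ.erase j,
          (((M x).updateRow j b).updateRow a (fderiv 𝕜 (fun y => M y a) x v)).det := by
  have hrow_j : (fun y => (M y).updateRow j b j) = fun _ => b := by
    funext y; simp
  have hrow_ne : ∀ a ≠ j, (fun y => (M y).updateRow j b a) = fun y => M y a := by
    intro a ha; funext y; simp [ha]
  have hdiff : ∀ a, DifferentiableAt 𝕜 (fun y => (M y).updateRow j b a) x := by
    intro a
    rcases eq_or_ne a j with rfl | ha
    · rw [hrow_j]; exact differentiableAt_const _
    · rw [hrow_ne a ha]; exact hM a
  rw [fderiv_det_apply hdiff, ← add_sum_erase _ _ (mem_univ j), hrow_j, fderiv_const_apply,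
    _root_.zero_apply, det_eq_zero_of_row_eq_zero j (fun k => by simp), zero_add]
  exact sum_congr rfl fun a ha => by rw [hrow_ne a (ne_of_mem_erase ha)]

end Calculus

theorem hasFDerivAt_jacobian_row {d : ℕ} {f : (Fin d → ℝ) → (Fin d → ℝ)} {x : Fin d → ℝ}
    (hf : DifferentiableAt ℝ (fderiv ℝ f) x) (a : Fin d) :
    HasFDerivAt (fun y => jacobian f y a)
      ((ContinuousLinearMap.pi fun k => (ContinuousLinearMap.proj a).comp
        (ContinuousLinearMap.apply ℝ (Fin d → ℝ) (Pi.single k 1))).comp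
          (fderiv ℝ (fderiv ℝ f) x)) x :=
  (ContinuousLinearMap.hasFDerivAt _).comp x hf.hasFDerivAt
    (g := ContinuousLinearMap.pi fun k => (ContinuousLinearMap.proj a).comp
      (ContinuousLinearMap.apply ℝ (Fin d → ℝ) (Pi.single k 1)))

theorem fderiv_jacobian_row_apply {d : ℕ} {f : (Fin d → ℝ) → (Fin d → ℝ)} {x : Fin d → ℝ}
    (hf : DifferentiableAt ℝ (fderiv ℝ f) x) (a : Fin d) (v : Fin d → ℝ) :
    fderiv ℝ (fun y => jacobian f y a) x v
      = fun k => fderiv ℝ (fderiv ℝ f) x v (Pi.single k 1) a := by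
  rw [(hasFDerivAt_jacobian_row hf a).fderiv]
  rfl

theorem piola_identity_general {d : ℕ} (f : (Fin d → ℝ) → (Fin d → ℝ))
    (hf : ContDiff ℝ 2 f) :
    ∀ (x : Fin d → ℝ) (j : Fin d),
      ∑ i, fderiv ℝ (fun y => (Matrix.adjugate (jacobian f y)) i j) x (Pi.single i 1) = 0 := by
  intro x j
  have hf' : DifferentiableAt ℝ (fderiv ℝ f) x :=
    ((hf.fderiv_right (by norm_num)).differentiable one_ne_zero).differentiableAt
  have hsymm : IsSymmSndFDerivAt ℝ f x :=
    hf.contDiffAt.isSymmSndFDerivAt (by simp [minSmoothness_of_isRCLikeNormedField])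
  have hHessian : ∀ a,
      (of fun i k => fderiv ℝ (fderiv ℝ f) x (Pi.single i 1) (Pi.single k 1) a).IsSymm :=
    fun a => IsSymm.ext fun i k => congrFun (hsymm.eq _ _) a
  simp only [adjugate_apply,
    fderiv_det_updateRow_apply fun a => (hasFDerivAt_jacobian_row hf' a).differentiableAt,
    fderiv_jacobian_row_apply hf']
  rw [sum_comm]
  exact sum_eq_zero fun a ha =>
    sum_det_updateRow_single_updateRow_eq_zero _ (ne_of_mem_erase ha).symm (hHessian a)

/-- **Piola identity**: for a twice continuously differentiable map `f : ℝ^d → ℝ^d`,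
the column-wise divergence of the adjugate of the Jacobian of `f` vanishes:
for every `x` and every `j`, `∑ i, ∂/∂x_i (Adj(Df(x)))_{ij} = 0`. -/
theorem piola_identity {d : ℕ} (hd : 1 ≤ d) (f : (Fin d → ℝ) → (Fin d → ℝ))
    (hf : ContDiff ℝ 2 f) :
    ∀ (x : Fin d → ℝ) (j : Fin d),
      ∑ i, fderiv ℝ (fun y => (Matrix.adjugate (jacobian f y)) i j) x (Pi.single i 1) = 0 :=
  piola_identity_general f hf
end

section
/- Divergence identity for the Piola transform: Let d ≥ 1, let ψ : ℝ^d → ℝ^d be twice continuously differentiable and let v : ℝ^d → ℝ^d be continuously differentiable. Define the Piola transform v̂(x) = Adj(Dψ(x)) · v(ψ(x)). Then for every x ∈ ℝ^d, div v̂(x) = det(Dψ(x)) · (div v)(ψ(x)). -/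
/-- The divergence of a vector field `v : ℝ^d → ℝ^d` at a point `x`:
`∑ i, ∂ v_i / ∂ x_i`. -/
noncomputable def vdiv {d : ℕ} (v : (Fin d → ℝ) → (Fin d → ℝ)) (x : Fin d → ℝ) : ℝ :=
  ∑ i, fderiv ℝ (fun y => v y i) x (Pi.single i 1)

/-!
By the product rule, `div (Adj (Dψ) · v ∘ ψ)` is `∑ⱼ (div of column j of Adj (Dψ)) · vⱼ ∘ ψ`
plus `tr (Adj (Dψ) · D(v ∘ ψ)) = tr (Adj (Dψ) · Dv(ψ) · Dψ) = tr (Dψ · Adj (Dψ) · Dv(ψ))`,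
and `Dψ · Adj (Dψ) = det (Dψ) · I` turns the trace into `det (Dψ) · div v (ψ)`.

The first sum vanishes by the Piola identity: `Adj (Dψ)ᵢⱼ` is the determinant of `Dψ` with row `j`
replaced by `eᵢ`. Differentiating it row by row in direction `eᵢ` and summing over `i`, the
contribution of row `k ≠ j` is `∑ᵢₘ ∂ᵢ∂ₘψₖ · det(row j = eᵢ, row k = eₘ)`, a symmetric
coefficient (equality of mixed partials) against a determinant antisymmetric in `(i, m)`.
-/

open Finset

namespace Matrix

section LinearAlgebra

variable {n R : Type*} [Fintype n] [DecidableEq n] [CommRing R]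

theorem det_updateRow_updateRow_comm (A : Matrix n n R) {j k : n} (hjk : j ≠ k) (a b : n → R) :
    ((A.updateRow j a).updateRow k b).det = -((A.updateRow j b).updateRow k a).det := by
  have hswap : ((A.updateRow j a).updateRow k b).submatrix (Equiv.swap j k) id
      = (A.updateRow j b).updateRow k a := by
    ext t l
    rcases eq_or_ne t j with rfl | htj
    · simp [updateRow_apply, hjk]
    rcases eq_or_ne t k with rfl | htk
    · simp [updateRow_apply, hjk]
    · simp [updateRow_apply, Equiv.swap_apply_of_ne_of_ne htj htk, htj, htk]
  rw [← hswap, det_permute, Equiv.Perm.sign_swap hjk]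
  simp

theorem det_updateRow_eq_sum (A : Matrix n n R) (k : n) (w : n → R) :
    (A.updateRow k w).det = ∑ m, w m * (A.updateRow k (Pi.single m 1)).det := by
  have hw : w = ∑ m, w m • (Pi.single m 1 : n → R) := by
    simpa [← Pi.single_smul] using (univ_sum_single w).symm
  conv_lhs => rw [hw]
  refine (detRowAlternating.map_update_sum univ k (fun m => w m • Pi.single m 1) A).trans ?_
  refine sum_congr rfl fun m _ => ?_
  exact det_updateRow_smul A k (w m) (Pi.single m 1)

theorem sum_det_updateRow_single_updateRow_eq_zero [NoZeroDivisors R] [CharZero R]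
    (A C : Matrix n n R) (hC : C.IsSymm) {j k : n} (hjk : j ≠ k) :
    ∑ i, ((A.updateRow j (Pi.single i 1)).updateRow k (C i)).det = 0 := by
  set D : n → n → R := fun i m =>
    ((A.updateRow j (Pi.single i 1)).updateRow k (Pi.single m 1)).det
  have hD : ∀ i m, D i m = -D m i := fun i m => det_updateRow_updateRow_comm A hjk _ _
  have hS : ∑ i, ∑ m, C i m * D i m = -∑ i, ∑ m, C i m * D i m := by
    conv_lhs => rw [sum_comm]
    simp only [← sum_neg_distrib]
    refine sum_congr rfl fun m _ => sum_congr rfl fun i _ => ?_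
    rw [hD, ← hC.apply i m]
    ring
  simp only [det_updateRow_eq_sum _ k (C _)]
  exact self_eq_neg.mp hS

end LinearAlgebra

section Calculus

variable {𝕜 E n : Type*} [NontriviallyNormedField 𝕜] [NormedAddCommGroup E] [NormedSpace 𝕜 E]
  [DecidableEq n] {M : E → Matrix n n 𝕜} {x : E}

theorem differentiableAt_updateRow_apply (hM : ∀ i j, DifferentiableAt 𝕜 (fun y => M y i j) x)
    (j : n) (a : n → 𝕜) (k l : n) :
    DifferentiableAt 𝕜 (fun y => (M y).updateRow j a k l) x := by
  rcases eq_or_ne k j with rfl | hkj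
  · simp
  · simpa [updateRow_ne hkj] using hM k l

variable [Fintype n]

noncomputable def detRowContinuousMultilinear_s1 :
    ContinuousMultilinearMap 𝕜 (fun _ : n => n → 𝕜) 𝕜 :=
  ⟨detRowAlternating.toMultilinearMap, continuous_id.matrix_det⟩

theorem hasFDerivAt_det (hM : ∀ i j, DifferentiableAt 𝕜 (fun y => M y i j) x) :
    HasFDerivAt (fun y => (M y).det)
      ((detRowContinuousMultilinear_s1.linearDeriv (M x)).comp
        (fderiv 𝕜 (fun y => (M y : n → n → 𝕜)) x)) x := by
  have hrows : DifferentiableAt 𝕜 (fun y => (M y : n → n → 𝕜)) x :=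
    differentiableAt_pi.2 fun i => differentiableAt_pi.2 (hM i)
  exact (detRowContinuousMultilinear_s1.hasFDerivAt (M x)).comp x hrows.hasFDerivAt

theorem differentiableAt_det (hM : ∀ i j, DifferentiableAt 𝕜 (fun y => M y i j) x) :
    DifferentiableAt 𝕜 (fun y => (M y).det) x :=
  (hasFDerivAt_det hM).differentiableAt

theorem fderiv_det_apply (hM : ∀ i j, DifferentiableAt 𝕜 (fun y => M y i j) x) (v : E) :
    fderiv 𝕜 (fun y => (M y).det) x v
      = ∑ k, ((M x).updateRow k fun j => fderiv 𝕜 (fun y => M y k j) x v).det := by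
  rw [(hasFDerivAt_det hM).fderiv, ContinuousLinearMap.comp_apply]
  refine (ContinuousMultilinearMap.linearDeriv_apply _ _ _).trans (sum_congr rfl fun k _ => ?_)
  rw [fderiv_pi fun i => differentiableAt_pi.2 (hM i), ContinuousLinearMap.pi_apply,
    fderiv_pi (hM k)]
  rfl

theorem differentiableAt_adjugate_apply (hM : ∀ i j, DifferentiableAt 𝕜 (fun y => M y i j) x)
    (i j : n) : DifferentiableAt 𝕜 (fun y => (M y).adjugate i j) x := by
  simp_rw [adjugate_apply]
  exact differentiableAt_det (differentiableAt_updateRow_apply hM j _)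

theorem fderiv_adjugate_apply (hM : ∀ i j, DifferentiableAt 𝕜 (fun y => M y i j) x)
    (i j : n) (v : E) :
    fderiv 𝕜 (fun y => (M y).adjugate i j) x v
      = ∑ k ∈ univ.erase j, (((M x).updateRow j (Pi.single i 1)).updateRow k
          fun l => fderiv 𝕜 (fun y => M y k l) x v).det := by
  simp_rw [adjugate_apply]
  rw [fderiv_det_apply (differentiableAt_updateRow_apply hM j _), ← add_sum_erase _ _ (mem_univ j),
    det_eq_zero_of_row_eq_zero j fun l => by simp, zero_add]
  refine sum_congr rfl fun k hk => ?_
  simp only [updateRow_ne (ne_of_mem_erase hk)]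

end Calculus

end Matrix

section Jacobian

open Matrix

variable {d : ℕ} {f g : (Fin d → ℝ) → (Fin d → ℝ)} {x : Fin d → ℝ}

theorem jacobian_eq_toMatrix' (f : (Fin d → ℝ) → (Fin d → ℝ)) (x : Fin d → ℝ) :
    jacobian f x = LinearMap.toMatrix' (fderiv ℝ f x : (Fin d → ℝ) →ₗ[ℝ] Fin d → ℝ) := by
  ext i j
  rw [LinearMap.toMatrix'_apply]
  rfl

theorem jacobian_comp (hg : DifferentiableAt ℝ g (f x)) (hf : DifferentiableAt ℝ f x) :
    jacobian (g ∘ f) x = jacobian g (f x) * jacobian f x := by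
  rw [jacobian_eq_toMatrix', fderiv_comp x hg hf, ContinuousLinearMap.toLinearMap_comp,
    LinearMap.toMatrix'_comp, jacobian_eq_toMatrix', jacobian_eq_toMatrix']

theorem jacobian_apply_eq_fderiv (hf : DifferentiableAt ℝ f x) (i j : Fin d) :
    jacobian f x i j = fderiv ℝ (fun y => f y i) x (Pi.single j 1) := by
  rw [fderiv_apply hf]
  rfl

theorem vdiv_eq_trace_jacobian (hf : DifferentiableAt ℝ f x) : vdiv f x = (jacobian f x).trace :=
  sum_congr rfl fun i _ => (jacobian_apply_eq_fderiv hf i i).symm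

theorem vdiv_mulVec {A : (Fin d → ℝ) → Matrix (Fin d) (Fin d) ℝ} {w : (Fin d → ℝ) → (Fin d → ℝ)}
    (hA : ∀ i j, DifferentiableAt ℝ (fun y => A y i j) x) (hw : DifferentiableAt ℝ w x) :
    vdiv (fun y => A y *ᵥ w y) x
      = ∑ j, vdiv (fun y i => A y i j) x * w x j + (A x * jacobian w x).trace := by
  have hwj : ∀ j, DifferentiableAt ℝ (fun y => w y j) x := differentiableAt_pi.1 hw
  have hcomp : ∀ i, fderiv ℝ (fun y => (A y *ᵥ w y) i) x (Pi.single i 1)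
      = ∑ j, (fderiv ℝ (fun y => A y i j) x (Pi.single i 1) * w x j
        + A x i j * jacobian w x j i) := by
    intro i
    simp only [mulVec, dotProduct]
    rw [fderiv_fun_sum (u := univ) (A := fun j y => A y i j * w y j)
      fun j _ => (hA i j).mul (hwj j), _root_.sum_apply]
    refine sum_congr rfl fun j _ => ?_
    rw [fderiv_fun_mul (hA i j) (hwj j), jacobian_apply_eq_fderiv hw]
    simp only [_root_.add_apply, _root_.smul_apply, smul_eq_mul]
    ring
  simp only [vdiv, hcomp, sum_add_distrib, trace, Matrix.diag, mul_apply, sum_mul]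
  rw [sum_comm]

variable {ψ : (Fin d → ℝ) → (Fin d → ℝ)}

theorem hasFDerivAt_jacobian_apply (hψ : ContDiffAt ℝ 2 ψ x) (k m : Fin d) :
    HasFDerivAt (fun y => jacobian ψ y k m)
      ((ContinuousLinearMap.proj k).comp ((fderiv ℝ (fderiv ℝ ψ) x).flip (Pi.single m 1))) x := by
  have hΦ : DifferentiableAt ℝ (fderiv ℝ ψ) x :=
    (hψ.fderiv_right (m := 1) le_rfl).differentiableAt one_ne_zero
  let T : ((Fin d → ℝ) →L[ℝ] Fin d → ℝ) →L[ℝ] ℝ :=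
    (ContinuousLinearMap.proj (R := ℝ) (φ := fun _ : Fin d => ℝ) k).comp
      (ContinuousLinearMap.apply ℝ (Fin d → ℝ) (Pi.single m 1))
  exact T.hasFDerivAt.comp x hΦ.hasFDerivAt

theorem differentiableAt_jacobian_apply (hψ : ContDiffAt ℝ 2 ψ x) (k m : Fin d) :
    DifferentiableAt ℝ (fun y => jacobian ψ y k m) x :=
  (hasFDerivAt_jacobian_apply hψ k m).differentiableAt

theorem fderiv_jacobian_apply_single_comm (hψ : ContDiffAt ℝ 2 ψ x) (k i m : Fin d) :
    fderiv ℝ (fun y => jacobian ψ y k m) x (Pi.single i 1)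
      = fderiv ℝ (fun y => jacobian ψ y k i) x (Pi.single m 1) := by
  rw [(hasFDerivAt_jacobian_apply hψ k m).fderiv, (hasFDerivAt_jacobian_apply hψ k i).fderiv]
  exact congrFun (hψ.isSymmSndFDerivAt (by simp) _ _) k

theorem vdiv_adjugate_jacobian_col_eq_zero (hψ : ContDiffAt ℝ 2 ψ x) (j : Fin d) :
    vdiv (fun y i => (jacobian ψ y).adjugate i j) x = 0 := by
  simp only [vdiv, fderiv_adjugate_apply (differentiableAt_jacobian_apply hψ)]
  rw [sum_comm]
  refine sum_eq_zero fun k hk => ?_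
  exact sum_det_updateRow_single_updateRow_eq_zero _
    (of fun i m => fderiv ℝ (fun y => jacobian ψ y k m) x (Pi.single i 1))
    (IsSymm.ext fun i m => fderiv_jacobian_apply_single_comm hψ k m i) (ne_of_mem_erase hk).symm

end Jacobian

theorem piola_transform_div_general {d : ℕ}
    (ψ v : (Fin d → ℝ) → (Fin d → ℝ))
    (hψ : ContDiff ℝ 2 ψ) (hv : ContDiff ℝ 1 v) :
    ∀ x : Fin d → ℝ,
      vdiv (fun y => (Matrix.adjugate (jacobian ψ y)).mulVec (v (ψ y))) x
        = (jacobian ψ x).det * vdiv v (ψ x) := by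
  intro x
  have hψx : ContDiffAt ℝ 2 ψ x := hψ.contDiffAt
  have hψd : DifferentiableAt ℝ ψ x := hψx.differentiableAt two_ne_zero
  have hvd : DifferentiableAt ℝ v (ψ x) := hv.differentiable one_ne_zero _
  refine (vdiv_mulVec (w := v ∘ ψ) (Matrix.differentiableAt_adjugate_apply
    (differentiableAt_jacobian_apply hψx)) (hvd.comp x hψd)).trans ?_
  simp only [vdiv_adjugate_jacobian_col_eq_zero hψx, zero_mul, sum_const_zero, zero_add]
  rw [jacobian_comp hvd hψd, ← Matrix.mul_assoc, Matrix.trace_mul_cycle, Matrix.mul_adjugate,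
    Matrix.smul_mul, Matrix.one_mul, Matrix.trace_smul, vdiv_eq_trace_jacobian hvd, smul_eq_mul]

/-- **Divergence identity for the Piola transform**: for `ψ : ℝ^d → ℝ^d` twice continuously
differentiable and `v : ℝ^d → ℝ^d` continuously differentiable, the Piola transform
`v̂(x) = Adj(Dψ(x)) · v(ψ(x))` satisfies `div v̂(x) = det(Dψ(x)) · (div v)(ψ(x))`. -/
theorem piola_transform_div {d : ℕ} (hd : 1 ≤ d)
    (ψ v : (Fin d → ℝ) → (Fin d → ℝ))
    (hψ : ContDiff ℝ 2 ψ) (hv : ContDiff ℝ 1 v) :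
    ∀ x : Fin d → ℝ,
      vdiv (fun y => (Matrix.adjugate (jacobian ψ y)).mulVec (v (ψ y))) x
        = (jacobian ψ x).det * vdiv v (ψ x) :=
  piola_transform_div_general ψ v hψ hv
end

section
/- ε-scaled Poincaré inequality in a periodically perforated domain: Let d, m ≥ 1, let Y = (0,1)^d be the unit cell and let Y^s ⊂ Y be a measurable set of positive Lebesgue measure (the solid part of the cell). Then there exists a constant c_P > 0, depending only on Y^s, such that for every ε > 0, every finite set K ⊂ ℤ^d, and every continuously differentiable function v : ℝ^d → ℝ^m that vanishes on ⋃_{k∈K} ε(k + Y^s), one has ∫_{Ω_{K,ε}} |v(x)|² dx ≤ c_P² · ε² · ∫_{Ω_{K,ε}} ‖Dv(x)‖² dx, where Ω_{K,ε} = ⋃_{k∈K} ε(k + Y). -/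
/-!
On a single cell `Y`, write `v(x) = v(x) - v(y)` for `y ∈ Yˢ` as the integral of `Dv` along the
segment from `y` to `x`; Cauchy–Schwarz gives `|v(x)|² ≤ d ∫₀¹ ‖Dv(y + t(x - y))‖² dt`.
Averaging over `x ∈ Y` and `y ∈ Yˢ`, for each `t` one of the maps `y ↦ y + t(x - y)`,
`x ↦ y + t(x - y)` is a homothety of ratio at least `1/2` mapping into the convex set `Y`, so
the triple integral is at most `2^d ∫_Y ‖Dv‖²`. Hence `|Yˢ| ∫_Y |v|² ≤ d 2^d ∫_Y ‖Dv‖²`.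
Rescaling by `ε` turns this into the same inequality on each cell `ε(k + Y)` with an extra
factor `ε²`, and summing over the disjoint cells gives the theorem with `c_P² = d 2^d / |Yˢ|`.
-/

open MeasureTheory

/-- The open unit cell `Y = (0,1)^d` in `ℝ^d`. -/
def unitCell (d : ℕ) : Set (Fin d → ℝ) :=
  Set.pi Set.univ fun _ => Set.Ioo (0 : ℝ) 1

/-- The `ε`-scaled translated copy `ε(k + S)` of a set `S ⊆ ℝ^d`, for `k ∈ ℤ^d`. -/
def scaledCell {d : ℕ} (ε : ℝ) (k : Fin d → ℤ) (S : Set (Fin d → ℝ)) :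
    Set (Fin d → ℝ) :=
  (fun y => ε • ((fun i => (k i : ℝ)) + y)) '' S

open Set ENNReal Module Function

theorem sq_integral_le_integral_sq {Ω : Type*} [MeasurableSpace Ω] {μ : Measure Ω}
    [IsProbabilityMeasure μ] {f : Ω → ℝ} (hf : MemLp f 2 μ) :
    (∫ x, f x ∂μ) ^ 2 ≤ ∫ x, f x ^ 2 ∂μ := by
  have := ProbabilityTheory.variance_nonneg f μ
  rw [ProbabilityTheory.variance_eq_sub hf] at this
  simpa using this

theorem integral_le_of_mul_lintegral_le {α : Type*} [MeasurableSpace α] {μ : Measure α}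
    {f g : α → ℝ} (hf : Integrable f μ) (hg : Integrable g μ) (hf0 : 0 ≤ f) (hg0 : 0 ≤ g)
    {a : ℝ≥0∞} (ha0 : a ≠ 0) (ha : a ≠ ∞) {c : ℝ} (hc : 0 ≤ c)
    (h : a * ∫⁻ x, ENNReal.ofReal (f x) ∂μ ≤ ENNReal.ofReal c * ∫⁻ x, ENNReal.ofReal (g x) ∂μ) :
    ∫ x, f x ∂μ ≤ c / a.toReal * ∫ x, g x ∂μ := by
  rw [← ofReal_integral_eq_lintegral_ofReal hf (ae_of_all _ hf0),
    ← ofReal_integral_eq_lintegral_ofReal hg (ae_of_all _ hg0), ← ENNReal.ofReal_mul hc] at h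
  have h' := ENNReal.toReal_mono ofReal_ne_top h
  rw [toReal_mul, toReal_ofReal (integral_nonneg hf0),
    toReal_ofReal (mul_nonneg hc (integral_nonneg hg0))] at h'
  rw [div_mul_eq_mul_div, le_div_iff₀ (toReal_pos ha0 ha)]
  linarith

instance : IsProbabilityMeasure (volume.restrict (Ioc (0 : ℝ) 1)) :=
  ⟨by simp⟩

theorem sq_le_setIntegral_sq_fderiv_segment {E : Type*} [NormedAddCommGroup E]
    [NormedSpace ℝ E] {u : E → ℝ} (hu : ContDiff ℝ 1 u) {x y : E} (hy : u y = 0) :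
    u x ^ 2 ≤ ∫ t in Ioc (0 : ℝ) 1, fderiv ℝ u (y + t • (x - y)) (x - y) ^ 2 := by
  set ψ := fun t : ℝ => fderiv ℝ u (y + t • (x - y)) (x - y)
  have hψ : Continuous ψ := by
    have := hu.continuous_fderiv one_ne_zero
    fun_prop
  have hderiv : ∀ t : ℝ, HasDerivAt (fun s : ℝ => u (y + s • (x - y))) (ψ t) t := by
    intro t
    have hline : HasDerivAt (fun s : ℝ => y + s • (x - y)) (x - y) t := by
      simpa using ((hasDerivAt_id t).smul_const (x - y)).const_add y
    exact ((hu.differentiable one_ne_zero) _).hasFDerivAt.comp_hasDerivAt t hline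
  have hftc : u x = ∫ t in Ioc (0 : ℝ) 1, ψ t := by
    have := intervalIntegral.integral_eq_sub_of_hasDerivAt (fun t _ => hderiv t)
      (hψ.intervalIntegrable 0 1)
    rw [intervalIntegral.integral_of_le zero_le_one] at this
    simpa [hy] using this.symm
  rw [hftc]
  exact sq_integral_le_integral_sq
    ((memLp_two_iff_integrable_sq hψ.aestronglyMeasurable).2 (hψ.pow 2).integrableOn_Ioc)

theorem sq_apply_le_sum_sq_mul_sum_sq {d : ℕ} (L : (Fin d → ℝ) →L[ℝ] ℝ) (w : Fin d → ℝ) :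
    L w ^ 2 ≤ (∑ j, w j ^ 2) * ∑ j, L (Pi.single j 1) ^ 2 := by
  have hL : L w = ∑ j, w j * L (Pi.single j 1) := by
    conv_lhs => rw [← Finset.univ_sum_single w]
    rw [map_sum]
    refine Finset.sum_congr rfl fun j _ => ?_
    rw [← smul_eq_mul, ← map_smul, ← Pi.single_smul', smul_eq_mul, mul_one]
  rw [hL]
  exact Finset.sum_mul_sq_le_sq_mul_sq _ _ _

section Jacobian

variable {d m : ℕ}

noncomputable def jacobianNormSq (v : (Fin d → ℝ) → Fin m → ℝ) (x : Fin d → ℝ) : ℝ :=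
  ∑ i, ∑ j, fderiv ℝ (fun z => v z i) x (Pi.single j 1) ^ 2

theorem jacobianNormSq_nonneg (v : (Fin d → ℝ) → Fin m → ℝ) (x : Fin d → ℝ) :
    0 ≤ jacobianNormSq v x := by
  unfold jacobianNormSq
  positivity

theorem continuous_fderiv_apply_coord {v : (Fin d → ℝ) → Fin m → ℝ} (hv : ContDiff ℝ 1 v)
    (i : Fin m) (w : Fin d → ℝ) : Continuous fun x => fderiv ℝ (fun z => v z i) x w :=
  ((contDiff_pi.1 hv i).continuous_fderiv one_ne_zero).clm_apply continuous_const

theorem continuous_jacobianNormSq {v : (Fin d → ℝ) → Fin m → ℝ} (hv : ContDiff ℝ 1 v) :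
    Continuous (jacobianNormSq v) := by
  have := continuous_fderiv_apply_coord hv
  unfold jacobianNormSq
  fun_prop

theorem sum_sq_le_mul_setIntegral_jacobianNormSq {v : (Fin d → ℝ) → Fin m → ℝ}
    (hv : ContDiff ℝ 1 v) {x y : Fin d → ℝ} (hy : v y = 0) :
    ∑ i, v x i ^ 2 ≤
      (∑ j, (x j - y j) ^ 2) * ∫ t in Ioc (0 : ℝ) 1, jacobianNormSq v (y + t • (x - y)) := by
  have hD := continuous_fderiv_apply_coord hv
  calc ∑ i, v x i ^ 2
      ≤ ∑ i, ∫ t in Ioc (0 : ℝ) 1, fderiv ℝ (fun z => v z i) (y + t • (x - y)) (x - y) ^ 2 :=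
        Finset.sum_le_sum fun i _ =>
          sq_le_setIntegral_sq_fderiv_segment (contDiff_pi.1 hv i) (congrFun hy i)
    _ ≤ ∑ i, ∫ t in Ioc (0 : ℝ) 1, (∑ j, (x j - y j) ^ 2) *
          ∑ j, fderiv ℝ (fun z => v z i) (y + t • (x - y)) (Pi.single j 1) ^ 2 :=
        Finset.sum_le_sum fun i _ => setIntegral_mono (Continuous.integrableOn_Ioc (by fun_prop))
          (Continuous.integrableOn_Ioc (by fun_prop)) fun t =>
          sq_apply_le_sum_sq_mul_sum_sq _ _
    _ = _ := by
        rw [← integral_const_mul, ← integral_finsetSum]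
        · simp only [jacobianNormSq, Finset.mul_sum]
        · intro i _
          exact Continuous.integrableOn_Ioc (by fun_prop)

end Jacobian

section AddHaar

variable {E : Type*} [NormedAddCommGroup E] [NormedSpace ℝ E] [MeasurableSpace E] [BorelSpace E]

theorem measurableEmbedding_add_smul (a : E) {t : ℝ} (ht : t ≠ 0) :
    MeasurableEmbedding fun x : E => a + t • x :=
  (MeasurableEquiv.addLeft a).measurableEmbedding.comp (measurableEmbedding_const_smul₀ ht)

variable [FiniteDimensional ℝ E] (μ : Measure E) [μ.IsAddHaarMeasure]

theorem map_add_smul_addHaar (a : E) {t : ℝ} (ht : t ≠ 0) :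
    Measure.map (fun x => a + t • x) μ = ENNReal.ofReal |(t ^ finrank ℝ E)⁻¹| • μ := by
  have : (fun x : E => a + t • x) = (a + ·) ∘ (t • ·) := rfl
  rw [this, ← Measure.map_map (measurable_const_add a) (measurable_const_smul t),
    Measure.map_addHaar_smul μ ht, Measure.map_smul, map_add_left_eq_self]

theorem setLIntegral_preimage_add_smul (a : E) {t : ℝ} (ht : t ≠ 0) (f : E → ℝ≥0∞)
    (s : Set E) :
    ∫⁻ x in (fun x => a + t • x) ⁻¹' s, f (a + t • x) ∂μ
      = ENNReal.ofReal |(t ^ finrank ℝ E)⁻¹| * ∫⁻ y in s, f y ∂μ := by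
  have hT := measurableEmbedding_add_smul a ht
  rw [← hT.lintegral_map, ← hT.restrict_map, map_add_smul_addHaar μ a ht, Measure.restrict_smul,
    lintegral_smul_measure, smul_eq_mul]

theorem setLIntegral_comp_add_smul_le (Φ : E → ℝ≥0∞) {A B : Set E} (a : E) {t : ℝ}
    (ht : 1 / 2 ≤ t) (hAB : MapsTo (fun x => a + t • x) A B) :
    ∫⁻ x in A, Φ (a + t • x) ∂μ ≤ 2 ^ finrank ℝ E * ∫⁻ z in B, Φ z ∂μ := by
  have ht0 : 0 < t := by linarith
  have hjac : ENNReal.ofReal |(t ^ finrank ℝ E)⁻¹| ≤ 2 ^ finrank ℝ E := by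
    have ht' : t⁻¹ ≤ 2 := by rw [inv_le_comm₀ ht0 two_pos]; linarith
    rw [abs_of_pos (by positivity), ← inv_pow, ← ENNReal.ofReal_ofNat 2,
      ← ENNReal.ofReal_pow zero_le_two]
    exact ENNReal.ofReal_le_ofReal (pow_le_pow_left₀ (by positivity) ht' _)
  calc ∫⁻ x in A, Φ (a + t • x) ∂μ
      ≤ ∫⁻ x in (fun x => a + t • x) ⁻¹' B, Φ (a + t • x) ∂μ := lintegral_mono_set hAB
    _ = ENNReal.ofReal |(t ^ finrank ℝ E)⁻¹| * ∫⁻ z in B, Φ z ∂μ :=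
        setLIntegral_preimage_add_smul μ a ht0.ne' Φ B
    _ ≤ 2 ^ finrank ℝ E * ∫⁻ z in B, Φ z ∂μ := by gcongr

theorem lintegral_lintegral_segment_le {Φ : E → ℝ≥0∞} (hΦ : Measurable Φ) {Y Ys : Set E}
    (hY : Convex ℝ Y) (hYs : Ys ⊆ Y) {t : ℝ} (ht : t ∈ Icc (0 : ℝ) 1) :
    ∫⁻ x in Y, ∫⁻ y in Ys, Φ (y + t • (x - y)) ∂μ ∂μ
      ≤ 2 ^ finrank ℝ E * μ Y * ∫⁻ z in Y, Φ z ∂μ := by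
  have hseg : ∀ x y : E, y + t • (x - y) = t • x + (1 - t) • y := fun x y => by
    simp only [smul_sub, sub_smul, one_smul]; abel
  simp_rw [hseg]
  -- substitute for whichever of `x`, `y` carries the coefficient `≥ 1/2`
  rcases le_total t (1 / 2) with hle | hge
  · calc ∫⁻ x in Y, ∫⁻ y in Ys, Φ (t • x + (1 - t) • y) ∂μ ∂μ
        ≤ ∫⁻ _ in Y, 2 ^ finrank ℝ E * ∫⁻ z in Y, Φ z ∂μ ∂μ :=
          setLIntegral_mono measurable_const fun x hx =>
            setLIntegral_comp_add_smul_le μ Φ _ (by linarith) fun y hy =>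
              hY hx (hYs hy) ht.1 (by linarith) (by ring)
      _ = 2 ^ finrank ℝ E * μ Y * ∫⁻ z in Y, Φ z ∂μ := by rw [setLIntegral_const]; ring
  · rw [lintegral_lintegral_swap (f := fun x y => Φ (t • x + (1 - t) • y)) ((hΦ.comp
      (by fun_prop : Measurable fun p : E × E => t • p.1 + (1 - t) • p.2)).aemeasurable)]
    calc ∫⁻ y in Ys, ∫⁻ x in Y, Φ (t • x + (1 - t) • y) ∂μ ∂μ
        ≤ ∫⁻ _ in Ys, 2 ^ finrank ℝ E * ∫⁻ z in Y, Φ z ∂μ ∂μ := by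
          refine setLIntegral_mono measurable_const fun y hy => ?_
          simp_rw [add_comm (t • _)]
          exact setLIntegral_comp_add_smul_le μ Φ _ hge fun x hx =>
            hY (hYs hy) hx (by linarith [ht.2]) ht.1 (by ring)
      _ ≤ 2 ^ finrank ℝ E * μ Y * ∫⁻ z in Y, Φ z ∂μ := by
          rw [setLIntegral_const, mul_right_comm]; gcongr

end AddHaar

section UnitCell

variable {d m : ℕ}

theorem measurableSet_unitCell : MeasurableSet (unitCell d) :=
  MeasurableSet.univ_pi fun _ => measurableSet_Ioo

theorem volume_unitCell : volume (unitCell d) = 1 := by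
  simp [unitCell, volume_pi_pi]

theorem convex_unitCell : Convex ℝ (unitCell d) :=
  convex_pi fun _ _ => convex_Ioo 0 1

theorem unitCell_subset_Icc : unitCell d ⊆ Icc 0 1 := by
  rw [← pi_univ_Icc]
  exact pi_mono fun _ _ => Ioo_subset_Icc_self

theorem sum_sq_sub_le_of_mem_unitCell {x y : Fin d → ℝ} (hx : x ∈ unitCell d)
    (hy : y ∈ unitCell d) : ∑ j, (x j - y j) ^ 2 ≤ d := by
  calc ∑ j, (x j - y j) ^ 2 ≤ ∑ _j : Fin d, (1 : ℝ) := by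
        refine Finset.sum_le_sum fun j _ => ?_
        obtain ⟨hx0, hx1⟩ := hx j (mem_univ j)
        obtain ⟨hy0, hy1⟩ := hy j (mem_univ j)
        nlinarith
    _ = d := by simp

theorem ofReal_sum_sq_le_lintegral_segment {v : (Fin d → ℝ) → Fin m → ℝ} (hv : ContDiff ℝ 1 v)
    {x y : Fin d → ℝ} (hx : x ∈ unitCell d) (hy : y ∈ unitCell d) (hvy : v y = 0) :
    ENNReal.ofReal (∑ i, v x i ^ 2)
      ≤ d * ∫⁻ t in Ioc (0 : ℝ) 1, ENNReal.ofReal (jacobianNormSq v (y + t • (x - y))) := by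
  have hG := continuous_jacobianNormSq hv
  rw [← ofReal_integral_eq_lintegral_ofReal (Continuous.integrableOn_Ioc (by fun_prop))
      (ae_of_all _ fun _ => jacobianNormSq_nonneg _ _),
    ← ENNReal.ofReal_natCast, ← ENNReal.ofReal_mul (Nat.cast_nonneg _)]
  refine ENNReal.ofReal_le_ofReal ((sum_sq_le_mul_setIntegral_jacobianNormSq hv hvy).trans ?_)
  exact mul_le_mul_of_nonneg_right (sum_sq_sub_le_of_mem_unitCell hx hy)
    (setIntegral_nonneg measurableSet_Ioc fun _ _ => jacobianNormSq_nonneg _ _)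

theorem unitCell_poincare {Ys : Set (Fin d → ℝ)} (hYs : Ys ⊆ unitCell d)
    {v : (Fin d → ℝ) → Fin m → ℝ} (hv : ContDiff ℝ 1 v) (hv0 : ∀ y ∈ Ys, v y = 0) :
    volume Ys * ∫⁻ x in unitCell d, ENNReal.ofReal (∑ i, v x i ^ 2)
      ≤ d * 2 ^ d * ∫⁻ x in unitCell d, ENNReal.ofReal (jacobianNormSq v x) := by
  set Φ := fun z => ENNReal.ofReal (jacobianNormSq v z)
  have hΦ : Continuous Φ := ENNReal.continuous_ofReal.comp (continuous_jacobianNormSq hv)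
  have hF : Continuous fun x => ENNReal.ofReal (∑ i, v x i ^ 2) :=
    ENNReal.continuous_ofReal.comp (by have := hv.continuous; fun_prop)
  calc volume Ys * ∫⁻ x in unitCell d, ENNReal.ofReal (∑ i, v x i ^ 2)
      = ∫⁻ x in unitCell d, ∫⁻ _ in Ys, ENNReal.ofReal (∑ i, v x i ^ 2) := by
        simp_rw [setLIntegral_const, mul_comm _ (volume Ys)]
        exact (lintegral_const_mul _ hF.measurable).symm
    _ ≤ ∫⁻ x in unitCell d, ∫⁻ y in Ys, d * ∫⁻ t in Ioc (0 : ℝ) 1, Φ (y + t • (x - y)) :=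
        setLIntegral_mono' measurableSet_unitCell fun x hx =>
          setLIntegral_mono (by fun_prop) fun y hy =>
            ofReal_sum_sq_le_lintegral_segment hv hx (hYs hy) (hv0 y hy)
    _ = d * ∫⁻ t in Ioc (0 : ℝ) 1, ∫⁻ x in unitCell d, ∫⁻ y in Ys, Φ (y + t • (x - y)) := by
        simp_rw [lintegral_const_mul' _ _ (natCast_ne_top d)]
        congr 1
        exact (lintegral_congr fun x => lintegral_lintegral_swap (by fun_prop)).trans
          (lintegral_lintegral_swap (by fun_prop))
    _ ≤ d * ∫⁻ t in Ioc (0 : ℝ) 1, 2 ^ d * volume (unitCell d) * ∫⁻ z in unitCell d, Φ z := by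
        gcongr (d : ℝ≥0∞) * ?_
        refine setLIntegral_mono' measurableSet_Ioc fun t ht => ?_
        simpa only [finrank_fin_fun] using lintegral_lintegral_segment_le volume hΦ.measurable
          convex_unitCell hYs (Ioc_subset_Icc_self ht)
    _ = d * 2 ^ d * ∫⁻ x in unitCell d, ENNReal.ofReal (jacobianNormSq v x) := by
        simp [volume_unitCell, mul_assoc, Φ]

end UnitCell

section ScaledCell

variable {d m : ℕ}

theorem scaledCell_eq_image (ε : ℝ) (k : Fin d → ℤ) (S : Set (Fin d → ℝ)) :
    scaledCell ε k S = (fun y => ε • (fun i => (k i : ℝ)) + ε • y) '' S := by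
  simp only [scaledCell, smul_add]

theorem preimage_scaledCell {ε : ℝ} (hε : ε ≠ 0) (k : Fin d → ℤ) (S : Set (Fin d → ℝ)) :
    (fun y => ε • (fun i => (k i : ℝ)) + ε • y) ⁻¹' scaledCell ε k S = S := by
  rw [scaledCell_eq_image]
  exact ((add_right_injective _).comp (smul_right_injective _ hε)).preimage_image S

theorem measurableSet_scaledCell {ε : ℝ} (hε : ε ≠ 0) (k : Fin d → ℤ) {S : Set (Fin d → ℝ)}
    (hS : MeasurableSet S) : MeasurableSet (scaledCell ε k S) := by
  rw [scaledCell_eq_image]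
  exact (measurableEmbedding_add_smul _ hε).measurableSet_image.2 hS

theorem setLIntegral_scaledCell {ε : ℝ} (hε : 0 < ε) (k : Fin d → ℤ)
    (f : (Fin d → ℝ) → ℝ≥0∞) (S : Set (Fin d → ℝ)) :
    ∫⁻ y in S, f (ε • (fun i => (k i : ℝ)) + ε • y)
      = ENNReal.ofReal (ε ^ d)⁻¹ * ∫⁻ x in scaledCell ε k S, f x := by
  have := setLIntegral_preimage_add_smul volume (ε • fun i => (k i : ℝ)) hε.ne' f
    (scaledCell ε k S)
  rwa [preimage_scaledCell hε.ne', finrank_fin_fun, abs_of_pos (by positivity)] at this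

theorem jacobianNormSq_comp_add_smul (v : (Fin d → ℝ) → Fin m → ℝ) (a : Fin d → ℝ) (ε : ℝ)
    (y : Fin d → ℝ) :
    jacobianNormSq (fun z => v (a + ε • z)) y = ε ^ 2 * jacobianNormSq v (a + ε • y) := by
  have hD : ∀ i, fderiv ℝ (fun z => v (a + ε • z) i) y
      = ε • fderiv ℝ (fun z => v z i) (a + ε • y) := fun i => by
    rw [← fderiv_comp_add_left]
    exact fderiv_comp_smul (f := fun z => v (a + z) i) ε
  simp only [jacobianNormSq, hD, FunLike.coe_smul, Pi.smul_apply, smul_eq_mul, mul_pow,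
    Finset.mul_sum]

theorem scaledCell_poincare {Ys : Set (Fin d → ℝ)} (hYs : Ys ⊆ unitCell d) {ε : ℝ}
    (hε : 0 < ε) (k : Fin d → ℤ) {v : (Fin d → ℝ) → Fin m → ℝ} (hv : ContDiff ℝ 1 v)
    (hv0 : ∀ x ∈ scaledCell ε k Ys, v x = 0) :
    volume Ys * ∫⁻ x in scaledCell ε k (unitCell d), ENNReal.ofReal (∑ i, v x i ^ 2)
      ≤ ENNReal.ofReal (d * 2 ^ d * ε ^ 2) *
        ∫⁻ x in scaledCell ε k (unitCell d), ENNReal.ofReal (jacobianNormSq v x) := by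
  set a : Fin d → ℝ := ε • fun i => (k i : ℝ)
  have hw := unitCell_poincare hYs (v := fun z => v (a + ε • z)) (hv.comp (by fun_prop))
    fun y hy => hv0 _ (by rw [scaledCell_eq_image]; exact mem_image_of_mem _ hy)
  simp_rw [jacobianNormSq_comp_add_smul, ENNReal.ofReal_mul (sq_nonneg ε)] at hw
  rw [lintegral_const_mul' _ _ ofReal_ne_top,
    setLIntegral_scaledCell hε k fun x => ENNReal.ofReal (∑ i, v x i ^ 2),
    setLIntegral_scaledCell hε k fun x => ENNReal.ofReal (jacobianNormSq v x)] at hw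
  have hc : ENNReal.ofReal (ε ^ d)⁻¹ ≠ 0 := by simp; positivity
  have hconst : ENNReal.ofReal (d * 2 ^ d * ε ^ 2) = d * 2 ^ d * ENNReal.ofReal (ε ^ 2) := by
    rw [ENNReal.ofReal_mul (by positivity), ENNReal.ofReal_mul (by positivity),
      ENNReal.ofReal_natCast, ENNReal.ofReal_pow zero_le_two, ENNReal.ofReal_ofNat]
  refine (ENNReal.mul_le_mul_iff_right hc ofReal_ne_top).1 ?_
  rw [hconst]
  convert hw using 1 <;> ring

theorem pairwise_disjoint_scaledCell_unitCell {ε : ℝ} (hε : ε ≠ 0) :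
    Pairwise (Disjoint on fun k : Fin d → ℤ => scaledCell ε k (unitCell d)) := by
  intro k k' hkk
  rw [onFun, Set.disjoint_left]
  rintro _ ⟨y, hy, rfl⟩ ⟨y', hy', heq⟩
  have hfloor : ∀ (j : ℤ) (z : ℝ), z ∈ Ioo 0 1 → ⌊(j : ℝ) + z⌋ = j := fun j z hz => by
    rw [Int.floor_intCast_add, Int.floor_eq_zero_iff.2 ⟨hz.1.le, hz.2⟩, add_zero]
  refine hkk (funext fun i => ?_)
  have hi : (k' i : ℝ) + y' i = k i + y i := by simpa [hε] using congrFun heq i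
  rw [← hfloor (k i) (y i) (hy i trivial), ← hi, hfloor _ _ (hy' i trivial)]

theorem biUnion_scaledCell_poincare {Ys : Set (Fin d → ℝ)} (hYs : Ys ⊆ unitCell d) {ε : ℝ}
    (hε : 0 < ε) (K : Finset (Fin d → ℤ)) {v : (Fin d → ℝ) → Fin m → ℝ} (hv : ContDiff ℝ 1 v)
    (hv0 : ∀ x ∈ ⋃ k ∈ K, scaledCell ε k Ys, v x = 0) :
    volume Ys * ∫⁻ x in ⋃ k ∈ K, scaledCell ε k (unitCell d), ENNReal.ofReal (∑ i, v x i ^ 2)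
      ≤ ENNReal.ofReal (d * 2 ^ d * ε ^ 2) *
        ∫⁻ x in ⋃ k ∈ K, scaledCell ε k (unitCell d), ENNReal.ofReal (jacobianNormSq v x) := by
  have hdisj := (pairwise_disjoint_scaledCell_unitCell hε.ne').set_pairwise (K : Set (Fin d → ℤ))
  have hmeas := fun k (_ : k ∈ K) => measurableSet_scaledCell hε.ne' k measurableSet_unitCell
  rw [lintegral_biUnion_finset hdisj hmeas, lintegral_biUnion_finset hdisj hmeas,
    Finset.mul_sum, Finset.mul_sum]
  exact Finset.sum_le_sum fun k hk =>
    scaledCell_poincare hYs hε k hv fun x hx => hv0 x (mem_biUnion hk hx)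

theorem integrableOn_biUnion_scaledCell {f : (Fin d → ℝ) → ℝ} (hf : Continuous f) (ε : ℝ)
    (K : Finset (Fin d → ℤ)) : IntegrableOn f (⋃ k ∈ K, scaledCell ε k (unitCell d)) := by
  have hK : IsCompact (⋃ k ∈ K, scaledCell ε k (Icc 0 1)) :=
    K.isCompact_biUnion fun k _ => isCompact_Icc.image (by fun_prop)
  exact (hf.continuousOn.integrableOn_compact hK).mono_set
    (biUnion_mono subset_rfl fun k _ => image_mono unitCell_subset_Icc)

end ScaledCell

theorem eps_scaled_poincare_general {d m : ℕ} (hd : 1 ≤ d)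
    (Ys : Set (Fin d → ℝ)) (hYsub : Ys ⊆ unitCell d)
    (hYpos : 0 < volume Ys) :
    ∃ cP : ℝ, 0 < cP ∧
      ∀ (ε : ℝ), 0 < ε → ∀ (K : Finset (Fin d → ℤ)),
        ∀ v : (Fin d → ℝ) → (Fin m → ℝ), ContDiff ℝ 1 v →
          (∀ x ∈ ⋃ k ∈ K, scaledCell ε k Ys, v x = 0) →
          ∫ x in ⋃ k ∈ K, scaledCell ε k (unitCell d), ∑ i, (v x i) ^ 2
            ≤ cP ^ 2 * ε ^ 2 *
              ∫ x in ⋃ k ∈ K, scaledCell ε k (unitCell d),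
                ∑ i, ∑ j, (fderiv ℝ (fun z => v z i) x (Pi.single j 1)) ^ 2 := by
  have hYfin : volume Ys ≠ ∞ :=
    ne_top_of_le_ne_top (by simp [volume_unitCell]) (measure_mono hYsub)
  have hd0 : (0 : ℝ) < d := by exact_mod_cast hd
  have hY0 : 0 < (volume Ys).toReal := toReal_pos hYpos.ne' hYfin
  refine ⟨√(d * 2 ^ d / (volume Ys).toReal), by positivity, fun ε hε K v hv hv0 => ?_⟩
  have hv2 : Continuous fun x => ∑ i, v x i ^ 2 := by have := hv.continuous; fun_prop
  have key := integral_le_of_mul_lintegral_le (integrableOn_biUnion_scaledCell hv2 ε K)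
    (integrableOn_biUnion_scaledCell (continuous_jacobianNormSq hv) ε K)
    (fun x => by positivity) (jacobianNormSq_nonneg v) hYpos.ne' hYfin (by positivity)
    (biUnion_scaledCell_poincare hYsub hε K hv hv0)
  rw [Real.sq_sqrt (by positivity)]
  refine key.trans_eq ?_
  unfold jacobianNormSq
  ring

/-- **ε-scaled Poincaré inequality in a periodically perforated domain**: if `Yˢ ⊆ (0,1)^d`
has positive measure, then there is `c_P > 0` (depending only on `Yˢ`) such that for every
`ε > 0`, every finite `K ⊆ ℤ^d`, and every `C¹` function `v : ℝ^d → ℝ^m` vanishing on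
`⋃_{k∈K} ε(k + Yˢ)`,
`∫_Ω |v|² ≤ c_P² ε² ∫_Ω ‖Dv‖²`, where `Ω = ⋃_{k∈K} ε(k + Y)`. -/
theorem eps_scaled_poincare {d m : ℕ} (hd : 1 ≤ d) (hm : 1 ≤ m)
    (Ys : Set (Fin d → ℝ)) (hYsub : Ys ⊆ unitCell d)
    (hYmeas : MeasurableSet Ys) (hYpos : 0 < volume Ys) :
    ∃ cP : ℝ, 0 < cP ∧
      ∀ (ε : ℝ), 0 < ε → ∀ (K : Finset (Fin d → ℤ)),
        ∀ v : (Fin d → ℝ) → (Fin m → ℝ), ContDiff ℝ 1 v →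
          (∀ x ∈ ⋃ k ∈ K, scaledCell ε k Ys, v x = 0) →
          ∫ x in ⋃ k ∈ K, scaledCell ε k (unitCell d), ∑ i, (v x i) ^ 2
            ≤ cP ^ 2 * ε ^ 2 *
              ∫ x in ⋃ k ∈ K, scaledCell ε k (unitCell d),
                ∑ i, ∑ j, (fderiv ℝ (fun z => v z i) x (Pi.single j 1)) ^ 2 :=
  eps_scaled_poincare_general hd Ys hYsub hYpos
end
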